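/- Randomization lower bound for S_p when p ≥ 2: let λ be a frequency, p ≥ 2, σ > 0 and C > 0 such that Σ|a_n|e^{-λ_n σ} ≤ C‖D‖_p for all Dirichlet polynomials D = Σ a_n e^{-λ_n s}. Then there is a constant C_p (from the Kahane–Khinchin inequality) such that for all finite coefficient sequences (a_n), Σ_{n=1}^N |a_n| e^{-λ_n σ} ≤ C·C_p (Σ_{n=1}^N |a_n|²)^{1/2}. -/

import Mathlib

/-!
Rademacher signs are replaced by independent uniform `(k+1)`-th roots of unity, `k = ⌈p/2⌉`.
Since `x^p ≤ s^p + s^(p-2k) x^(2k)`, the Besicovitch `p`-norm of `D` is controlled by the mean of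
`|D|^(2k) = |D^k|²`, which by Parseval is an explicit quadratic form in the coefficients of `D^k`.
Averaged over the phases, the cross term of two index tuples survives only if they have the same
multiplicities (all of them `< k+1`), i.e. if one is a permutation of the other; so the average is
at most `k! (Σ|a_n|²)^k`. Some twist `b_n = ζ^{r_n} a_n` does at least as well as the average, and
the hypothesis applied to `b`, which has `|b_n| = |a_n|`, gives the bound with
`C_p = (1 + k!)^(1/p)`.
-/

open Finset Filter

/-- The Besicovitch `r`-norm of a function on the real line. -/
noncomputable def bNorm (r : ℝ) (f : ℝ → ℂ) : ℝ :=
  (Filter.limsup (fun T : ℝ => (1 / (2 * T)) * ∫ t in (-T)..T, ‖f t‖ ^ r)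
    Filter.atTop) ^ (1 / r)

open Complex Topology
open scoped ComplexConjugate

noncomputable def windowMean {E : Type*} [NormedAddCommGroup E] [NormedSpace ℝ E]
    (g : ℝ → E) (T : ℝ) : E :=
  (1 / (2 * T)) • ∫ t in (-T)..T, g t

lemma norm_integral_exp_mul_I_le {ν : ℝ} (hν : ν ≠ 0) (T : ℝ) :
    ‖∫ t in (-T)..T, cexp (ν * t * I)‖ ≤ 2 / |ν| := by
  have hνI : (ν : ℂ) * I ≠ 0 := mul_ne_zero (ofReal_ne_zero.2 hν) I_ne_zero
  have hunit : ∀ s : ℝ, ‖cexp (ν * I * s)‖ = 1 := fun s => by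
    rw [show (ν : ℂ) * I * s = ((ν * s : ℝ) : ℂ) * I by push_cast; ring, norm_exp_ofReal_mul_I]
  simp_rw [show ∀ t : ℝ, (ν : ℂ) * t * I = ν * I * t from fun t => by ring]
  rw [integral_exp_mul_complex hνI, norm_div, norm_mul, norm_I, mul_one, norm_real,
    Real.norm_eq_abs]
  gcongr
  calc _ ≤ ‖cexp (ν * I * T)‖ + ‖cexp (ν * I * (-T : ℝ))‖ := norm_sub_le _ _
    _ = 2 := by rw [hunit, hunit]; norm_num

lemma tendsto_windowMean_exp_mul_I (ν : ℝ) :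
    Tendsto (windowMean fun t => cexp (ν * t * I)) atTop (𝓝 (if ν = 0 then 1 else 0)) := by
  split_ifs with hν
  · refine tendsto_const_nhds.congr' ?_
    filter_upwards [eventually_gt_atTop 0] with T hT
    simp only [windowMean, hν, ofReal_zero, zero_mul, Complex.exp_zero,
      intervalIntegral.integral_const, smul_smul]
    rw [show 1 / (2 * T) * (T - -T) = 1 by field_simp; ring, one_smul]
  · refine squeeze_zero_norm' ?_ ((tendsto_const_nhds (x := 2 / |ν|)).div_atTop
      (tendsto_id.const_mul_atTop two_pos))
    filter_upwards [eventually_gt_atTop 0] with T hT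
    rw [windowMean, norm_smul, Real.norm_of_nonneg (by positivity), one_div_mul_eq_div]
    exact div_le_div_of_nonneg_right (norm_integral_exp_mul_I_le hν T) (by positivity)

noncomputable section TrigPoly

variable {ι : Type*} [Fintype ι] (w : ι → ℝ) (c : ι → ℂ)

def trigPoly (t : ℝ) : ℂ := ∑ j, c j * cexp (-(w j * t) * I)

-- Frequencies may repeat, so Parseval keeps the cross terms of equal frequency.
def trigPolyMeanSq : ℝ := ∑ j, ∑ j', if w j' = w j then (c j * conj (c j')).re else 0

lemma trigPoly_pow (k : ℕ) (t : ℝ) :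
    trigPoly w c t ^ k =
      trigPoly (fun j : Fin k → ι => ∑ i, w (j i)) (fun j => ∏ i, c (j i)) t := by
  rw [trigPoly, trigPoly, Fintype.sum_pow]
  refine Finset.sum_congr rfl fun j _ => ?_
  rw [Finset.prod_mul_distrib, ← Complex.exp_sum]
  push_cast
  simp only [neg_mul, Finset.sum_neg_distrib, Finset.sum_mul]

lemma sq_norm_trigPoly (t : ℝ) :
    ((‖trigPoly w c t‖ ^ 2 : ℝ) : ℂ) =
      ∑ j, ∑ j', c j * conj (c j') * cexp (↑(w j' - w j) * t * I) := by
  rw [ofReal_pow, ← mul_conj', trigPoly, map_sum, Finset.sum_mul_sum]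
  refine Finset.sum_congr rfl fun j _ => Finset.sum_congr rfl fun j' _ => ?_
  rw [map_mul, ← Complex.exp_conj, mul_mul_mul_comm, ← Complex.exp_add]
  congr 2
  simp only [map_mul, map_neg, conj_I, conj_ofReal]
  push_cast
  ring

lemma tendsto_windowMean_sq_norm_trigPoly :
    Tendsto (windowMean fun t => ‖trigPoly w c t‖ ^ 2) atTop (𝓝 (trigPolyMeanSq w c)) := by
  have hmean : ∀ T, ((windowMean (fun t => ‖trigPoly w c t‖ ^ 2) T : ℝ) : ℂ) =
      ∑ j, ∑ j', c j * conj (c j') * windowMean (fun t => cexp (↑(w j' - w j) * t * I)) T := by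
    intro T
    simp only [windowMean, smul_eq_mul, ofReal_mul, ← intervalIntegral.integral_ofReal,
      real_smul, sq_norm_trigPoly]
    rw [intervalIntegral.integral_finsetSum fun j _ =>
      (continuous_finsetSum _ fun j' _ => by fun_prop).intervalIntegrable _ _, Finset.mul_sum]
    refine Finset.sum_congr rfl fun j _ => ?_
    rw [intervalIntegral.integral_finsetSum fun j' _ =>
      (by fun_prop : Continuous _).intervalIntegrable _ _, Finset.mul_sum]
    refine Finset.sum_congr rfl fun j' _ => ?_
    rw [intervalIntegral.integral_const_mul, mul_left_comm]
  have hlim : Tendsto (fun T => ((windowMean (fun t => ‖trigPoly w c t‖ ^ 2) T : ℝ) : ℂ)) atTop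
      (𝓝 (∑ j, ∑ j', c j * conj (c j') * if w j' - w j = 0 then 1 else 0)) := by
    simp only [hmean]
    exact tendsto_finsetSum _ fun j _ => tendsto_finsetSum _ fun j' _ =>
      (tendsto_windowMean_exp_mul_I _).const_mul _
  have hre : trigPolyMeanSq w c =
      (∑ j, ∑ j', c j * conj (c j') * if w j' - w j = 0 then 1 else 0).re := by
    simp [trigPolyMeanSq, Complex.re_sum, sub_eq_zero, apply_ite]
  rw [hre]
  exact (continuous_re.tendsto _).comp hlim

end TrigPoly

lemma rpow_le_rpow_add_rpow_mul_pow {x s p : ℝ} {k : ℕ} (hx : 0 ≤ x) (hs : 0 < s)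
    (hp : 0 < p) (hpk : p ≤ 2 * k) : x ^ p ≤ s ^ p + s ^ (p - 2 * k) * x ^ (2 * k) := by
  rcases le_total x s with hxs | hsx
  · exact (Real.rpow_le_rpow hx hxs hp.le).trans (le_add_of_nonneg_right (by positivity))
  · have hx0 : 0 < x := hs.trans_le hsx
    calc x ^ p = x ^ (p - 2 * k) * x ^ (2 * k) := by
          rw [← Real.rpow_natCast, ← Real.rpow_add hx0]; push_cast; ring_nf
      _ ≤ s ^ (p - 2 * k) * x ^ (2 * k) :=
          mul_le_mul_of_nonneg_right (Real.rpow_le_rpow_of_nonpos hs hsx (by linarith))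
            (by positivity)
      _ ≤ _ := le_add_of_nonneg_left (by positivity)

lemma windowMean_const_add_mul {g : ℝ → ℝ} (hg : Continuous g) (a b : ℝ) {T : ℝ} (hT : 0 < T) :
    windowMean (fun t => a + b * g t) T = a + b * windowMean g T := by
  simp only [windowMean, smul_eq_mul]
  rw [intervalIntegral.integral_add intervalIntegrable_const
    ((hg.intervalIntegrable _ _).const_mul b), intervalIntegral.integral_const_mul,
    intervalIntegral.integral_const, smul_eq_mul]
  field_simp
  ring

lemma windowMean_mono {f g : ℝ → ℝ} (hf : Continuous f) (hg : Continuous g) (hfg : f ≤ g)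
    {T : ℝ} (hT : 0 < T) : windowMean f T ≤ windowMean g T := by
  unfold windowMean
  gcongr
  exact intervalIntegral.integral_mono_on (by linarith) (hf.intervalIntegrable _ _)
    (hg.intervalIntegrable _ _) fun t _ => hfg t

lemma windowMean_nonneg {f : ℝ → ℝ} (hf : 0 ≤ f) {T : ℝ} (hT : 0 < T) : 0 ≤ windowMean f T :=
  smul_nonneg (by positivity) (intervalIntegral.integral_nonneg (by linarith) fun t _ => hf t)

lemma bNorm_le_of_tendsto_windowMean_pow {p : ℝ} (hp : 0 < p) {k : ℕ} (hpk : p ≤ 2 * k)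
    {f : ℝ → ℂ} (hf : Continuous f) {A s V : ℝ} (hA : 0 ≤ A) (hs : 0 < s)
    (hV : Tendsto (windowMean fun t => ‖f t‖ ^ (2 * k)) atTop (𝓝 V))
    (hVA : V ≤ A * s ^ (2 * k)) : bNorm p f ≤ (1 + A) ^ (1 / p) * s := by
  set u := windowMean fun t => ‖f t‖ ^ p
  have hcont : Continuous fun t => ‖f t‖ ^ p := hf.norm.rpow_const fun _ => Or.inr hp.le
  have hbound : ∀ᶠ T in atTop,
      u T ≤ s ^ p + s ^ (p - 2 * k) * windowMean (fun t => ‖f t‖ ^ (2 * k)) T := by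
    filter_upwards [eventually_gt_atTop 0] with T hT
    rw [← windowMean_const_add_mul (by fun_prop) _ _ hT]
    exact windowMean_mono hcont (by fun_prop)
      (fun t => rpow_le_rpow_add_rpow_mul_pow (norm_nonneg _) hs hp hpk) hT
  have hlim := (hV.const_mul (s ^ (p - 2 * k))).const_add (s ^ p)
  have hnonneg : ∀ᶠ T in atTop, 0 ≤ u T := by
    filter_upwards [eventually_gt_atTop 0] with T hT
    exact windowMean_nonneg (fun t => by positivity) hT
  have hlimsup : limsup u atTop ≤ s ^ p + s ^ (p - 2 * k) * V :=
    hlim.limsup_eq ▸ limsup_le_limsup hbound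
      (isBoundedUnder_of_eventually_ge hnonneg).isCoboundedUnder_le hlim.isBoundedUnder_le
  have hlimsup_nonneg : 0 ≤ limsup u atTop :=
    le_limsup_of_frequently_le hnonneg.frequently
      (hlim.isBoundedUnder_le.mono_le hbound)
  have hmoment : s ^ p + s ^ (p - 2 * k) * V ≤ (1 + A) * s ^ p := by
    calc s ^ p + s ^ (p - 2 * k) * V ≤ s ^ p + s ^ (p - 2 * k) * (A * s ^ (2 * k)) := by gcongr
      _ = (1 + A) * s ^ p := by
        rw [← Real.rpow_natCast, mul_left_comm, ← Real.rpow_add hs]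
        push_cast; ring_nf
  calc bNorm p f = limsup u atTop ^ (1 / p) := rfl
    _ ≤ ((1 + A) * s ^ p) ^ (1 / p) := by gcongr; exact hlimsup.trans hmoment
    _ = (1 + A) ^ (1 / p) * s := by
      rw [Real.mul_rpow (by positivity) (by positivity), ← Real.rpow_mul hs.le,
        mul_one_div_cancel hp.ne', Real.rpow_one]

lemma IsPrimitiveRoot.sum_pow_mul_conj_pow {ζ : ℂ} {M : ℕ} (hζ : IsPrimitiveRoot ζ M)
    {c₁ c₂ : ℕ} (h₁ : c₁ < M) (h₂ : c₂ < M) :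
    ∑ v : Fin M, (ζ ^ (v : ℕ)) ^ c₁ * conj ((ζ ^ (v : ℕ)) ^ c₂) =
      if c₁ = c₂ then (M : ℂ) else 0 := by
  have hM : M ≠ 0 := by omega
  have hconj : ∀ c : ℕ, conj (ζ ^ c) = (ζ ^ c)⁻¹ := fun c =>
    (inv_eq_conj (by rw [norm_pow, hζ.norm'_eq_one hM, one_pow])).symm
  have hζ0 : ζ ≠ 0 := hζ.ne_zero hM
  set x := ζ ^ c₁ * (ζ ^ c₂)⁻¹
  have hterm : ∀ v : ℕ, (ζ ^ v) ^ c₁ * conj ((ζ ^ v) ^ c₂) = x ^ v := fun v => by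
    rw [← pow_mul, ← pow_mul, hconj, mul_pow, inv_pow, ← pow_mul, ← pow_mul, mul_comm v,
      mul_comm v]
  simp_rw [hterm]
  rw [Fin.sum_univ_eq_sum_range (x ^ ·)]
  split_ifs with hc
  · simp [x, hc, hζ0]
  · have hx1 : x ≠ 1 := fun hx =>
      hc (hζ.pow_inj h₁ h₂ ((mul_inv_eq_one₀ (pow_ne_zero _ hζ0)).1 hx))
    have hxM : x ^ M = 1 := by
      rw [mul_pow, inv_pow, ← pow_mul, ← pow_mul, mul_comm c₁, mul_comm c₂, pow_mul, pow_mul,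
        hζ.pow_eq_one, one_pow, one_pow, inv_one, mul_one]
    rw [geom_sum_eq hx1, hxM, sub_self, zero_div]

section Fibers

variable {α ι : Type*} [Fintype α] [DecidableEq ι]

lemma exists_perm_of_card_fiber_eq {j j' : α → ι}
    (h : ∀ n, #{i | j i = n} = #{i | j' i = n}) : ∃ π : Equiv.Perm α, j' = j ∘ π := by
  have e : ∀ n, {i // j' i = n} ≃ {i // j i = n} := fun n =>
    Fintype.equivOfCardEq (by rw [Fintype.card_subtype, Fintype.card_subtype, h])
  exact ⟨Equiv.ofFiberEquiv e, funext fun i => (Equiv.ofFiberEquiv_map e i).symm⟩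

lemma card_card_fiber_eq_le [Fintype ι] [DecidableEq α] (j : α → ι)
    [DecidablePred fun j' : α → ι => ∀ n, #{i | j i = n} = #{i | j' i = n}] :
    #{j' : α → ι | ∀ n, #{i | j i = n} = #{i | j' i = n}} ≤ (Fintype.card α).factorial := by
  calc _ ≤ #((univ : Finset (Equiv.Perm α)).image fun π : Equiv.Perm α => j ∘ π) := by
        refine Finset.card_le_card fun j' hj' => ?_
        obtain ⟨π, rfl⟩ := exists_perm_of_card_fiber_eq (Finset.mem_filter.1 hj').2
        exact Finset.mem_image_of_mem _ (Finset.mem_univ π)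
    _ ≤ _ := Finset.card_image_le.trans (by rw [Finset.card_univ, Fintype.card_perm])

lemma prod_comp_eq_prod_pow_card_fiber {M : Type*} [CommMonoid M] (j : α → ι) [Fintype ι]
    (z : ι → M) : ∏ i, z (j i) = ∏ n, z n ^ #{i | j i = n} := by
  rw [← Finset.prod_fiberwise' univ j z]
  exact Finset.prod_congr rfl fun n _ => Finset.prod_const _

end Fibers

section Twist

variable {N k M : ℕ} {ζ : ℂ}

lemma sum_twist_prod_mul_conj (hζ : IsPrimitiveRoot ζ M) (hkM : k < M) (a : Fin N → ℂ)
    (j j' : Fin k → Fin N) :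
    ∑ r : Fin N → Fin M,
        (∏ i, ζ ^ (r (j i) : ℕ) * a (j i)) * conj (∏ i, ζ ^ (r (j' i) : ℕ) * a (j' i)) =
      if ∀ n, #{i | j i = n} = #{i | j' i = n} then
        (((M : ℝ) ^ N * ∏ i, ‖a (j i)‖ ^ 2 : ℝ) : ℂ) else 0 := by
  have hcard : ∀ (jj : Fin k → Fin N) n, #{i | jj i = n} < M := fun jj n =>
    (Finset.card_filter_le _ _).trans_lt (by simpa using hkM)
  have hsplit : ∀ r : Fin N → Fin M,
      (∏ i, ζ ^ (r (j i) : ℕ) * a (j i)) * conj (∏ i, ζ ^ (r (j' i) : ℕ) * a (j' i)) =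
        (∏ i, a (j i)) * conj (∏ i, a (j' i)) *
          ∏ n, (ζ ^ (r n : ℕ)) ^ #{i | j i = n} * conj ((ζ ^ (r n : ℕ)) ^ #{i | j' i = n}) := by
    intro r
    rw [Finset.prod_mul_distrib, Finset.prod_mul_distrib, Finset.prod_mul_distrib,
      prod_comp_eq_prod_pow_card_fiber j fun n => ζ ^ (r n : ℕ),
      prod_comp_eq_prod_pow_card_fiber j' fun n => ζ ^ (r n : ℕ), map_mul, map_prod]
    ring
  simp_rw [hsplit, ← Finset.mul_sum]
  rw [← Fintype.prod_sum fun n (v : Fin M) =>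
    (ζ ^ (v : ℕ)) ^ #{i | j i = n} * conj ((ζ ^ (v : ℕ)) ^ #{i | j' i = n})]
  simp_rw [hζ.sum_pow_mul_conj_pow (hcard j _) (hcard j' _)]
  rw [Fintype.prod_ite_zero]
  split_ifs with h
  · obtain ⟨π, rfl⟩ := exists_perm_of_card_fiber_eq h
    rw [Function.comp_def, Equiv.prod_comp π fun i => a (j i), mul_conj', Finset.prod_const,
      Finset.card_univ, Fintype.card_fin, norm_prod, Finset.prod_pow]
    push_cast
    ring
  · rw [mul_zero]

lemma sum_trigPolyMeanSq_twist_le (hζ : IsPrimitiveRoot ζ M) (hkM : k < M) (a : Fin N → ℂ)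
    (w : Fin N → ℝ) :
    ∑ r : Fin N → Fin M, trigPolyMeanSq (fun j : Fin k → Fin N => ∑ i, w (j i))
        (fun j => ∏ i, ζ ^ (r (j i) : ℕ) * a (j i)) ≤
      (M : ℝ) ^ N * (k.factorial * (∑ n, ‖a n‖ ^ 2) ^ k) := by
  have hpair : ∀ j j' : Fin k → Fin N,
      ∑ r : Fin N → Fin M, (if ∑ i, w (j' i) = ∑ i, w (j i) then
        ((∏ i, ζ ^ (r (j i) : ℕ) * a (j i)) * conj (∏ i, ζ ^ (r (j' i) : ℕ) * a (j' i))).re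
        else 0) ≤
        if ∀ n, #{i | j i = n} = #{i | j' i = n} then (M : ℝ) ^ N * ∏ i, ‖a (j i)‖ ^ 2 else 0 := by
    intro j j'
    have hre := congrArg re (sum_twist_prod_mul_conj hζ hkM a j j')
    rw [re_sum, apply_ite re, ofReal_re, zero_re] at hre
    split_ifs at hre ⊢
    · exact hre.le
    · exact hre.le
    · rw [Finset.sum_const_zero]; positivity
    · rw [Finset.sum_const_zero]
  calc _ = ∑ j : Fin k → Fin N, ∑ j' : Fin k → Fin N, ∑ r : Fin N → Fin M,
        (if ∑ i, w (j' i) = ∑ i, w (j i) then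
          ((∏ i, ζ ^ (r (j i) : ℕ) * a (j i)) * conj (∏ i, ζ ^ (r (j' i) : ℕ) * a (j' i))).re
          else 0) := by
        unfold trigPolyMeanSq
        rw [Finset.sum_comm]
        exact Finset.sum_congr rfl fun j _ => Finset.sum_comm
    _ ≤ ∑ j : Fin k → Fin N, ∑ j' : Fin k → Fin N,
        if ∀ n, #{i | j i = n} = #{i | j' i = n} then (M : ℝ) ^ N * ∏ i, ‖a (j i)‖ ^ 2 else 0 := by
        gcongr with j _ j' _
        exact hpair j j'
    _ ≤ ∑ j : Fin k → Fin N, (k.factorial : ℝ) * ((M : ℝ) ^ N * ∏ i, ‖a (j i)‖ ^ 2) := by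
        gcongr with j _
        rw [← Finset.sum_filter, Finset.sum_const, nsmul_eq_mul]
        refine mul_le_mul_of_nonneg_right ?_ (by positivity)
        exact_mod_cast Fintype.card_fin k ▸ card_card_fiber_eq_le j
    _ = _ := by
        rw [Fintype.sum_pow, Finset.mul_sum, Finset.mul_sum]
        exact Finset.sum_congr rfl fun j _ => by ring

lemma exists_twist_trigPolyMeanSq_le (hζ : IsPrimitiveRoot ζ M) (hkM : k < M) (a : Fin N → ℂ)
    (w : Fin N → ℝ) :
    ∃ r : Fin N → Fin M, trigPolyMeanSq (fun j : Fin k → Fin N => ∑ i, w (j i))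
        (fun j => ∏ i, ζ ^ (r (j i) : ℕ) * a (j i)) ≤ k.factorial * (∑ n, ‖a n‖ ^ 2) ^ k := by
  have : Nonempty (Fin M) := ⟨⟨0, by omega⟩⟩
  obtain ⟨r, -, hr⟩ := Finset.exists_le_of_sum_le univ_nonempty
    (f := fun r : Fin N → Fin M => trigPolyMeanSq (fun j : Fin k → Fin N => ∑ i, w (j i))
      (fun j => ∏ i, ζ ^ (r (j i) : ℕ) * a (j i)))
    (g := fun _ => k.factorial * (∑ n, ‖a n‖ ^ 2) ^ k) <| by
    rw [Finset.sum_const, Finset.card_univ, Fintype.card_fun, Fintype.card_fin, Fintype.card_fin,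
      nsmul_eq_mul]
    push_cast
    exact sum_trigPolyMeanSq_twist_le hζ hkM a w
  exact ⟨r, hr⟩

end Twist

lemma exists_twist_tendsto_windowMean_pow_le (a : ℕ → ℂ) (lam : ℕ → ℝ) (N k : ℕ) :
    ∃ b : ℕ → ℂ, (∀ n, ‖b n‖ = ‖a n‖) ∧ ∃ V ≤ k.factorial * (∑ n ∈ range N, ‖a n‖ ^ 2) ^ k,
      Tendsto (windowMean fun t => ‖∑ n ∈ range N, b n * cexp (-(lam n * t) * I)‖ ^ (2 * k))
        atTop (𝓝 V) := by
  have hζ : IsPrimitiveRoot (cexp (2 * Real.pi * I / (k + 1 : ℕ))) (k + 1) :=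
    Complex.isPrimitiveRoot_exp _ k.succ_ne_zero
  set ζ := cexp (2 * Real.pi * I / (k + 1 : ℕ))
  obtain ⟨r, hr⟩ := exists_twist_trigPolyMeanSq_le hζ k.lt_succ_self (fun i : Fin N => a i)
    (fun i => lam i)
  set c : Fin N → ℂ := fun i => ζ ^ (r i : ℕ) * a i
  refine ⟨fun n => if h : n < N then c ⟨n, h⟩ else a n, fun n => ?_, _,
    by simpa [Fin.sum_univ_eq_sum_range (fun n => ‖a n‖ ^ 2)] using hr, ?_⟩
  · dsimp only
    split_ifs
    · rw [norm_mul, norm_pow, hζ.norm'_eq_one k.succ_ne_zero, one_pow, one_mul]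
    · rfl
  · have hf : ∀ t : ℝ, ‖∑ n ∈ range N,
        (if h : n < N then c ⟨n, h⟩ else a n) * cexp (-(lam n * t) * I)‖ ^ (2 * k) =
        ‖trigPoly (fun j : Fin k → Fin N => ∑ i, lam (j i)) (fun j => ∏ i, c (j i)) t‖ ^ 2 := by
      intro t
      rw [pow_mul', ← norm_pow, ← trigPoly_pow (fun i : Fin N => lam i) c, trigPoly,
        ← Fin.sum_univ_eq_sum_range (fun n => (if h : n < N then c ⟨n, h⟩ else a n) *
          cexp (-(lam n * t) * I))]
      simp only [Fin.is_lt, dif_pos, Fin.eta]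
    simp_rw [hf]
    exact tendsto_windowMean_sq_norm_trigPoly _ _

theorem randomization_lower_bound_general (lam : ℕ → ℝ) (p : ℝ) (hp : 2 ≤ p) (σ : ℝ)
    (C : ℝ) (hC : 0 < C)
    (h : ∀ (N : ℕ) (a : ℕ → ℂ),
      ∑ n ∈ Finset.range N, ‖a n‖ * Real.exp (-(lam n) * σ) ≤
        C * bNorm p (fun t =>
          ∑ n ∈ Finset.range N, a n * Complex.exp (-(lam n * t) * Complex.I))) :
    ∃ Cp > (0 : ℝ), ∀ (N : ℕ) (a : ℕ → ℂ),
      ∑ n ∈ Finset.range N, ‖a n‖ * Real.exp (-(lam n) * σ) ≤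
        C * Cp * (∑ n ∈ Finset.range N, ‖a n‖ ^ 2) ^ (1 / 2 : ℝ) := by
  set k := ⌈p / 2⌉₊
  have hpk : p ≤ 2 * k := by linarith [Nat.le_ceil (p / 2)]
  refine ⟨(1 + k.factorial) ^ (1 / p), by positivity, fun N a => ?_⟩
  set Q := ∑ n ∈ range N, ‖a n‖ ^ 2
  rcases (Finset.sum_nonneg fun n _ => sq_nonneg ‖a n‖ : 0 ≤ Q).eq_or_lt with hQ | hQ
  · have ha : ∀ n ∈ range N, ‖a n‖ = 0 := fun n hn =>
      pow_eq_zero_iff two_ne_zero |>.1 <|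
        (Finset.sum_eq_zero_iff_of_nonneg fun n _ => sq_nonneg ‖a n‖).1 hQ.symm n hn
    rw [Finset.sum_eq_zero fun n hn => by rw [ha n hn, zero_mul]]
    positivity
  obtain ⟨b, hb, V, hV, hlim⟩ := exists_twist_tendsto_windowMean_pow_le a lam N k
  calc ∑ n ∈ range N, ‖a n‖ * Real.exp (-(lam n) * σ)
      = ∑ n ∈ range N, ‖b n‖ * Real.exp (-(lam n) * σ) := by simp_rw [hb]
    _ ≤ C * bNorm p (fun t => ∑ n ∈ range N, b n * cexp (-(lam n * t) * I)) := h N b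
    _ ≤ C * ((1 + k.factorial) ^ (1 / p) * Q ^ (1 / 2 : ℝ)) := by
      gcongr
      refine bNorm_le_of_tendsto_windowMean_pow (by linarith) hpk
        (continuous_finsetSum _ fun n _ => by fun_prop) (Nat.cast_nonneg _)
        (Real.rpow_pos_of_pos hQ _) hlim (hV.trans_eq ?_)
      rw [← Real.sqrt_eq_rpow, pow_mul, Real.sq_sqrt hQ.le]
    _ = _ := by ring

/-- Randomization lower bound for `S_p` when `p ≥ 2`: if
`Σ|a_n|e^{-λ_nσ} ≤ C‖D‖_p` for all Dirichlet polynomials, then there is a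
Kahane–Khinchin constant `C_p` with `Σ_{n<N}|a_n|e^{-λ_nσ} ≤ C·C_p (Σ_{n<N}|a_n|²)^{1/2}`. -/
theorem randomization_lower_bound (lam : ℕ → ℝ) (h1 : StrictMono lam) (h2 : ∀ n, 0 ≤ lam n)
    (h3 : Tendsto lam atTop atTop) (p : ℝ) (hp : 2 ≤ p) (σ : ℝ) (hσ : 0 < σ)
    (C : ℝ) (hC : 0 < C)
    (h : ∀ (N : ℕ) (a : ℕ → ℂ),
      ∑ n ∈ Finset.range N, ‖a n‖ * Real.exp (-(lam n) * σ) ≤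
        C * bNorm p (fun t =>
          ∑ n ∈ Finset.range N, a n * Complex.exp (-(lam n * t) * Complex.I))) :
    ∃ Cp > (0 : ℝ), ∀ (N : ℕ) (a : ℕ → ℂ),
      ∑ n ∈ Finset.range N, ‖a n‖ * Real.exp (-(lam n) * σ) ≤
        C * Cp * (∑ n ∈ Finset.range N, ‖a n‖ ^ 2) ^ (1 / 2 : ℝ) :=
  randomization_lower_bound_general lam p hp σ C hC h
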